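/- There is an absolute constant c > 0 with the following property. Let q, Q, M be positive integers with Q ≥ 12(q+1) and M ≤ ⌊Q/(4q)⌋, let a, b be integers with 1 ≤ a, b ≤ q and gcd(a,b,q) = 1, let (A,B) ∈ 𝒩_{a,b,q} with B ≤ A, let (x,y) ∈ [0,1]², and let P, P′ be any two distinct points of 𝓜_{A,B}. Then the measure θ of the angle ∠P P_{(x,y)} P′ at the vertex (x,y) satisfies |θ| ≤ c·M·(|b − qy| + |qx − a|)/Q². -/

import Mathlib

/-!
All points of `𝓜_{A,B}` lie on one line of direction `(A,B)`, `P = (u,v) + m(A,B)`, with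
`Av - Bu = C`, and seen from `X = (x,y) ∈ [0,1]²` they lie in the quadrant
`{p₁ ≥ Q/4, p₂ ≥ 0}`. Hence `⟪P - X, P' - X⟫ ≥ (Q/4)²`, the angle is acute and
`θ ≤ tan θ = |(P - X) × (P' - X)| / ⟪P - X, P' - X⟫`. The cross product equals
`(m' - m)(Ay - Bx - C)`, with `|m' - m| ≤ M`, and `q(Ay - Bx - C) = A(qy - b) + B(a - qx)`
with `A, B ≤ 2q` bounds the last factor by `2(|b - qy| + |qx - a|)`.
-/

open Real

/-- The point of `ℝ²` (as `EuclideanSpace ℝ (Fin 2)`) associated to a pair of reals. -/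
noncomputable def toPt (x y : ℝ) : EuclideanSpace ℝ (Fin 2) :=
  (WithLp.equiv 2 (Fin 2 → ℝ)).symm ![x, y]

/-- The (undirected) angle `∠ P P_{(x,y)} P'` at the vertex `(x,y)`. -/
noncomputable def angleAt (x y : ℝ) (P P' : ℤ × ℤ) : ℝ :=
  EuclideanGeometry.angle (toPt P.1 P.2) (toPt x y) (toPt P'.1 P'.2)

/-- The integer `C = (bA - aB)/q` attached to a pair `(A,B) ∈ 𝒩_{a,b,q}`. -/
def Cint (a b q : ℕ) (A B : ℤ) : ℤ := ((b : ℤ) * A - (a : ℤ) * B) / (q : ℤ)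

/-- The set `𝓜_{A,B}` in the case `B ≤ A`: with `C = (bA-aB)/q`, `u` the unique integer
in `[0, A-1]` with `A ∣ Bu + C`, `v = (Bu+C)/A` and `s = ⌊Q/A⌋`, it is the set of lattice
points `(u + mA, v + mB)` with `s - M ≤ m ≤ s - 1`. -/
def MMle (a b q Q M : ℕ) (A B : ℤ) : Set (ℤ × ℤ) :=
  {p | ∃ u m : ℤ, 0 ≤ u ∧ u < A ∧ A ∣ (B * u + Cint a b q A B) ∧
    (Q : ℤ) / A - (M : ℤ) ≤ m ∧ m ≤ (Q : ℤ) / A - 1 ∧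
    p = (u + m * A, (B * u + Cint a b q A B) / A + m * B)}

/-- The set `𝓜_{A,B}`: for `A < B` it is obtained by the same recipe with the roles of
the two coordinates (and of `A` and `B`, `a` and `b`) exchanged. -/
def MMset (a b q Q M : ℕ) (A B : ℤ) : Set (ℤ × ℤ) :=
  if B ≤ A then MMle a b q Q M A B else Prod.swap '' MMle b a q Q M B A

/-- The predicate `(A,B) ∈ 𝒩_{a,b,q}`. -/
def NNpred (a b q : ℕ) (A B : ℤ) : Prop :=
  1 ≤ A ∧ A ≤ 2 * (q : ℤ) ∧ 1 ≤ B ∧ B ≤ 2 * (q : ℤ) ∧ Int.gcd A B = 1 ∧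
    (q : ℤ) ∣ (A * (b : ℤ) - B * (a : ℤ))

/-- `𝓜̃_{a,b,q} = ⋃_{(A,B) ∈ 𝒩_{a,b,q}} 𝓜_{A,B}`. -/
def MMtilde (a b q Q M : ℕ) : Set (ℤ × ℤ) :=
  ⋃ A : ℤ, ⋃ B : ℤ, ⋃ (_ : NNpred a b q A B), MMset a b q Q M A B


open RealInnerProductSpace

theorem InnerProductGeometry.angle_le_sqrt_div_inner {V : Type*} [NormedAddCommGroup V]
    [InnerProductSpace ℝ V] {v w : V} (h : 0 < ⟪v, w⟫) :
    angle v w ≤ √(⟪v, v⟫ * ⟪w, w⟫ - ⟪v, w⟫ * ⟪v, w⟫) / ⟪v, w⟫ := by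
  have hv : v ≠ 0 := by rintro rfl; simp at h
  have hw : w ≠ 0 := by rintro rfl; simp at h
  have hnorm : 0 < ‖v‖ * ‖w‖ := by positivity
  have hlt : angle v w < π / 2 := by
    rw [angle, Real.arccos_lt_pi_div_two]
    exact div_pos h hnorm
  calc angle v w ≤ Real.tan (angle v w) := Real.le_tan (angle_nonneg v w) hlt
    _ = Real.sin (angle v w) * (‖v‖ * ‖w‖) / (Real.cos (angle v w) * (‖v‖ * ‖w‖)) := by
      rw [Real.tan_eq_sin_div_cos, mul_div_mul_right _ _ hnorm.ne']
    _ = _ := by rw [sin_angle_mul_norm_mul_norm, cos_angle_mul_norm_mul_norm]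

theorem inner_toPt (p₁ p₂ r₁ r₂ : ℝ) : ⟪toPt p₁ p₂, toPt r₁ r₂⟫ = p₁ * r₁ + p₂ * r₂ := by
  simp only [toPt, WithLp.equiv_symm_apply, PiLp.inner_apply, RCLike.inner_apply,
    conj_trivial, Fin.sum_univ_two, Matrix.cons_val_zero, Matrix.cons_val_one]
  ring

theorem toPt_sub_toPt (p₁ p₂ r₁ r₂ : ℝ) : toPt p₁ p₂ - toPt r₁ r₂ = toPt (p₁ - r₁) (p₂ - r₂) := by
  ext i
  fin_cases i <;> simp [toPt]

theorem angleAt_eq (x y : ℝ) (P P' : ℤ × ℤ) :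
    angleAt x y P P' =
      InnerProductGeometry.angle (toPt (P.1 - x) (P.2 - y)) (toPt (P'.1 - x) (P'.2 - y)) := by
  rw [angleAt, EuclideanGeometry.angle, vsub_eq_sub, vsub_eq_sub, toPt_sub_toPt, toPt_sub_toPt]

theorem angle_toPt_le {p₁ p₂ r₁ r₂ L : ℝ} (hL : 0 < L) (h : L ≤ p₁ * r₁ + p₂ * r₂) :
    InnerProductGeometry.angle (toPt p₁ p₂) (toPt r₁ r₂) ≤ |p₁ * r₂ - p₂ * r₁| / L := by
  set v := toPt p₁ p₂
  set w := toPt r₁ r₂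
  have hpos : 0 < ⟪v, w⟫ := by rw [inner_toPt]; linarith
  have hsqrt : √(⟪v, v⟫ * ⟪w, w⟫ - ⟪v, w⟫ * ⟪v, w⟫) = |p₁ * r₂ - p₂ * r₁| := by
    simp only [v, w, inner_toPt]
    rw [← Real.sqrt_sq_eq_abs]
    ring_nf
  calc _ ≤ _ := InnerProductGeometry.angle_le_sqrt_div_inner hpos
    _ = |p₁ * r₂ - p₂ * r₁| / (p₁ * r₁ + p₂ * r₂) := by rw [hsqrt, inner_toPt]
    _ ≤ _ := by gcongr

theorem angle_toPt_sub_le_of_mem_line {u v A B m m' x y L : ℝ} (hL : 0 < L)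
    (hp₁ : L ≤ u + m * A - x) (hr₁ : L ≤ u + m' * A - x)
    (hp₂ : 0 ≤ v + m * B - y) (hr₂ : 0 ≤ v + m' * B - y) :
    InnerProductGeometry.angle (toPt (u + m * A - x) (v + m * B - y))
        (toPt (u + m' * A - x) (v + m' * B - y)) ≤
      |m' - m| * |A * y - B * x - (A * v - B * u)| / L ^ 2 := by
  have hinner : L ^ 2 ≤ (u + m * A - x) * (u + m' * A - x) +
      (v + m * B - y) * (v + m' * B - y) := by
    nlinarith [mul_le_mul hp₁ hr₁ hL.le (hL.le.trans hp₁), mul_nonneg hp₂ hr₂]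
  calc _ ≤ _ := angle_toPt_le (by positivity) hinner
    _ = _ := by
      rw [← abs_mul]
      ring_nf

theorem Int.eq_of_dvd_mul_add_of_gcd_eq_one {A B C u u' : ℤ} (hAB : Int.gcd A B = 1)
    (hu : 0 ≤ u) (huA : u < A) (hu' : 0 ≤ u') (hu'A : u' < A)
    (hdvd : A ∣ B * u + C) (hdvd' : A ∣ B * u' + C) : u = u' := by
  have h : A ∣ B * (u - u') := by
    simpa only [add_sub_add_right_eq_sub, ← mul_sub] using dvd_sub hdvd hdvd'
  have := Int.eq_zero_of_abs_lt_dvd (Int.dvd_of_dvd_mul_right_of_gcd_one h hAB)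
    (by rw [abs_lt]; omega)
  omega

theorem mul_Cint {a b q : ℕ} {A B : ℤ} (h : (q : ℤ) ∣ A * b - B * a) :
    (q : ℤ) * Cint a b q A B = b * A - a * B :=
  Int.mul_ediv_cancel' (by simpa only [mul_comm] using h)

theorem neg_two_mul_le_Cint {a b q : ℕ} {A B : ℤ} (haq : a ≤ q) (hN : NNpred a b q A B) :
    -(2 * q : ℤ) ≤ Cint a b q A B := by
  obtain ⟨hA, hAq, hB, hBq, -, hdvd⟩ := hN
  have hqC := mul_Cint hdvd
  have hq : (0 : ℤ) < q := by omega
  have haq' : (a : ℤ) ≤ q := by exact_mod_cast haq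
  have hb : (0 : ℤ) ≤ b := by positivity
  nlinarith [mul_le_mul haq' hBq (by omega) hq.le, mul_nonneg hb (by omega : (0 : ℤ) ≤ A)]

theorem le_three_mul_mul_of_div_sub_le {q Q M : ℕ} {A m : ℤ} (hA : 0 < A) (hAq : A ≤ 2 * q)
    (hQ : 12 * (q + 1) ≤ Q) (hMQ : M ≤ Q / (4 * q)) (hm : (Q : ℤ) / A - M ≤ m) :
    (Q : ℤ) + 9 ≤ 3 * (m * A) := by
  have hMq : (M : ℤ) * (4 * q) ≤ Q := by
    exact_mod_cast (Nat.le_div_iff_mul_le (by omega)).mp hMQ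
  have hQA : (Q : ℤ) < Q / A * A + A := by
    linarith [Int.mul_ediv_add_emod (Q : ℤ) A, Int.emod_lt_of_pos (Q : ℤ) hA,
      mul_comm A (Q / A)]
  have hmA : ((Q : ℤ) / A - M) * A ≤ m * A := mul_le_mul_of_nonneg_right hm hA.le
  nlinarith

theorem add_mul_pos_of_mul_eq {A B C u v m : ℤ} (hA : 0 < A) (hB : 1 ≤ B) (hu : 0 ≤ u)
    (hv : A * v = B * u + C) (hmA : 0 ≤ m * A) (h : 0 < C + m * A) : 0 < v + m * B := by
  have : 0 < A * (v + m * B) := by nlinarith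
  exact pos_of_mul_pos_right this hA.le

theorem div_four_le_add_mul_sub {q Q M : ℕ} {A u n : ℤ} {x : ℝ} (hA : 0 < A)
    (hAq : A ≤ 2 * q) (hQ : 12 * (q + 1) ≤ Q) (hMQ : M ≤ Q / (4 * q)) (hu : 0 ≤ u)
    (hn : (Q : ℤ) / A - M ≤ n) (hx : x ≤ 1) : (Q : ℝ) / 4 ≤ u + n * A - x := by
  have h : (Q : ℝ) + 9 ≤ 3 * (n * A) := by
    exact_mod_cast le_three_mul_mul_of_div_sub_le hA hAq hQ hMQ hn
  have hu' : (0 : ℝ) ≤ u := by exact_mod_cast hu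
  linarith

theorem add_mul_sub_nonneg {a b q Q M : ℕ} {A B u v n : ℤ} {y : ℝ} (haq : a ≤ q)
    (hQ : 12 * (q + 1) ≤ Q) (hMQ : M ≤ Q / (4 * q)) (hN : NNpred a b q A B) (hu : 0 ≤ u)
    (hv : B * u + Cint a b q A B = A * v) (hn : (Q : ℤ) / A - M ≤ n) (hy : y ≤ 1) :
    0 ≤ v + n * B - y := by
  have hC := neg_two_mul_le_Cint haq hN
  obtain ⟨hA, hAq, hB, -⟩ := hN
  have h₁ := le_three_mul_mul_of_div_sub_le hA hAq hQ hMQ hn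
  have h₂ := add_mul_pos_of_mul_eq (m := n) hA hB hu hv.symm (by omega) (by omega)
  have h : (1 : ℝ) ≤ v + n * B := by exact_mod_cast h₂
  linarith

theorem abs_mul_sub_mul_sub_le {a b q A B C x y : ℝ} (hq : 0 < q) (hA : 0 ≤ A)
    (hAq : A ≤ 2 * q) (hB : 0 ≤ B) (hBq : B ≤ 2 * q) (hC : q * C = b * A - a * B) :
    |A * y - B * x - C| ≤ 2 * (|b - q * y| + |q * x - a|) := by
  have hid : q * (A * y - B * x - C) = A * (q * y - b) + B * (a - q * x) := by
    linear_combination -hC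
  refine le_of_mul_le_mul_left ?_ hq
  calc q * |A * y - B * x - C| = |A * (q * y - b) + B * (a - q * x)| := by
        rw [← hid, abs_mul, abs_of_pos hq]
    _ ≤ A * |b - q * y| + B * |q * x - a| := by
        refine (abs_add_le _ _).trans_eq ?_
        rw [abs_mul, abs_mul, abs_of_nonneg hA, abs_of_nonneg hB, abs_sub_comm (q * y),
          abs_sub_comm a]
    _ ≤ 2 * q * |b - q * y| + 2 * q * |q * x - a| := by gcongr
    _ = q * (2 * (|b - q * y| + |q * x - a|)) := by ring

/-- Estimate (4.18): there is an absolute constant `c > 0` such that for any two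
distinct points `P, P' ∈ 𝓜_{A,B}` (case `B ≤ A`) and any `(x,y) ∈ [0,1]²`, the angle
`θ = ∠ P P_{(x,y)} P'` satisfies `|θ| ≤ c M (|b - qy| + |qx - a|)/Q²`. -/
theorem angle_bound_on_MMle :
    ∃ c > (0 : ℝ), ∀ q Q M a b : ℕ,
      0 < q → 0 < Q → 12 * (q + 1) ≤ Q → 0 < M → M ≤ Q / (4 * q) →
      1 ≤ a → a ≤ q → 1 ≤ b → b ≤ q → Nat.gcd a (Nat.gcd b q) = 1 →
      ∀ A B : ℤ, NNpred a b q A B → B ≤ A →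
      ∀ P P', P ∈ MMle a b q Q M A B → P' ∈ MMle a b q Q M A B → P ≠ P' →
      ∀ x y : ℝ, x ∈ Set.Icc (0 : ℝ) 1 → y ∈ Set.Icc (0 : ℝ) 1 →
      |angleAt x y P P'| ≤
        c * (M : ℝ) * (|(b : ℝ) - (q : ℝ) * y| + |(q : ℝ) * x - (a : ℝ)|) / (Q : ℝ) ^ 2 := by
  refine ⟨32, by norm_num, ?_⟩
  intro q Q M a b hq _ hQ _ hMQ _ haq _ _ _ A B hN _ P P' hP hP' _ x y hx hy
  obtain ⟨hA, hAq, hB, hBq, hAB, hqdvd⟩ := id hN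
  obtain ⟨u, m, hu, huA, ⟨v, hv⟩, hm, hm₁, rfl⟩ := hP
  obtain ⟨u', m', hu', hu'A, hdvd', hm', hm₁', rfl⟩ := hP'
  obtain rfl := Int.eq_of_dvd_mul_add_of_gcd_eq_one hAB hu huA hu' hu'A ⟨v, hv⟩ hdvd'
  rw [hv, Int.mul_ediv_cancel_left _ (by omega), angleAt_eq,
    abs_of_nonneg (InnerProductGeometry.angle_nonneg _ _)]
  push_cast
  have hline : |(A : ℝ) * y - B * x - Cint a b q A B| ≤
      2 * (|(b : ℝ) - q * y| + |(q : ℝ) * x - a|) :=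
    abs_mul_sub_mul_sub_le (by positivity) (by exact_mod_cast (by omega : (0 : ℤ) ≤ A))
      (by exact_mod_cast hAq) (by exact_mod_cast (by omega : (0 : ℤ) ≤ B))
      (by exact_mod_cast hBq) (by exact_mod_cast mul_Cint hqdvd)
  have hmm : |(m' : ℝ) - m| ≤ M := by
    rw [abs_le]; constructor <;> norm_cast <;> omega
  have hvC : (A : ℝ) * v - B * u = Cint a b q A B := by
    linear_combination -(by exact_mod_cast hv : (B : ℝ) * u + Cint a b q A B = A * v)
  calc _ ≤ |(m' : ℝ) - m| * |A * y - B * x - Cint a b q A B| / ((Q : ℝ) / 4) ^ 2 := by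
        simpa only [hvC] using angle_toPt_sub_le_of_mem_line (by positivity)
          (div_four_le_add_mul_sub (by omega) hAq hQ hMQ hu hm hx.2)
          (div_four_le_add_mul_sub (by omega) hAq hQ hMQ hu hm' hx.2)
          (add_mul_sub_nonneg haq hQ hMQ hN hu hv hm hy.2)
          (add_mul_sub_nonneg haq hQ hMQ hN hu hv hm' hy.2)
    _ ≤ M * (2 * (|(b : ℝ) - q * y| + |(q : ℝ) * x - a|)) / ((Q : ℝ) / 4) ^ 2 := by gcongr
    _ = _ := by ring
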